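/- arXiv:2406.11468 — 3 statements merged into one kernel-verified Lean document; each statement's English description precedes it below -/
import Mathlib

section
/- Let E be a fractional Brauer configuration and let e₁, …, e_n ∈ E (n ≥ 1) be such that P(g·e_i) = P(e_{i+1}) for 1 ≤ i ≤ n-1. Then the following are equivalent: (1) there exists e ∈ E with L(g^{i-1}·e) = L(e_i) for all 1 ≤ i ≤ n; (2) the intersection ⋂_{i=1}^{n} g^{n-i}·L(e_i) is nonempty. -/
/-- A fractional Brauer configuration `E = (E, P, L, d)`:
a `G`-set `E` for `G = ⟨g⟩` infinite cyclic (encoded by the permutation `g`,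
so that `g ^ n` for `n : ℤ` gives the `G`-action), two partitions `P` and `L`
of `E` (encoded by the class maps `e ↦ P e`, `e ↦ L e`), and a degree function
`d : E → ℤ₊`, subject to conditions (f1)–(f6). -/
structure FracBrauerConfig (E : Type*) where
  g : Equiv.Perm E
  P : E → Set E
  L : E → Set E
  d : E → ℕ
  d_pos : ∀ e, 0 < d e
  mem_P : ∀ e, e ∈ P e
  P_class : ∀ e₁ e₂, e₂ ∈ P e₁ → P e₁ = P e₂
  mem_L : ∀ e, e ∈ L e
  L_class : ∀ e₁ e₂, e₂ ∈ L e₁ → L e₁ = L e₂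
  /-- (f1) `L(e) ⊆ P(e)` -/
  L_subset_P : ∀ e, L e ⊆ P e
  /-- (f1) each polygon is finite -/
  P_finite : ∀ e, (P e).Finite
  /-- (f2) -/
  f2 : ∀ e₁ e₂, L e₁ = L e₂ → P (g e₁) = P (g e₂)
  /-- (f3) `d` is constant on `⟨g⟩`-orbits -/
  f3 : ∀ (e : E) (n : ℤ), d ((g ^ n) e) = d e
  /-- (f4) -/
  f4 : ∀ e₁ e₂, P e₁ = P e₂ ↔ P ((g ^ (d e₁ : ℤ)) e₁) = P ((g ^ (d e₂ : ℤ)) e₂)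
  /-- (f5) -/
  f5 : ∀ e₁ e₂, L e₁ = L e₂ ↔ L ((g ^ (d e₁ : ℤ)) e₁) = L ((g ^ (d e₂ : ℤ)) e₂)
  /-- (f6) no full formal word is a proper right-aligned subword of another -/
  f6 : ∀ e h, (∀ i : ℕ, i < d e → L ((g ^ (i : ℤ)) e) = L ((g ^ (i : ℤ)) h)) → ¬ d e < d h

namespace FracBrauerConfig

variable {E : Type*} (C : FracBrauerConfig E)

/-- The Nakayama map `σ(e) = g^{d(e)}·e`. -/
def sigma (e : E) : E := (C.g ^ (C.d e : ℤ)) e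

/-- A standard sequence `(g^{n-1}·e, …, g·e, e)` is encoded by its base angle `e`
and its length `n`, with `0 ≤ n ≤ d(e)`. -/
abbrev StdSeq := {p : E × ℕ // p.2 ≤ C.d p.1}

/-- The associated formal sequence `L(p)` of a standard sequence: the source polygon
(accounting for the trivial-sequence label `1_{P(e)}`) together with the list of
`L`-classes `L(e), L(g·e), …, L(g^{n-1}·e)`. Two standard sequences are identical
(`p ≡ q`) exactly when their labels agree. -/
def lab (p : C.StdSeq) : Set E × List (Set E) :=
  (C.P p.1.1, (List.range p.1.2).map fun i => C.L ((C.g ^ (i : ℤ)) p.1.1))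

/-- The left complement `^p` of a standard sequence `p`. -/
def lcomp (p : C.StdSeq) : C.StdSeq :=
  ⟨((C.g ^ (p.1.2 : ℤ)) p.1.1, C.d p.1.1 - p.1.2), by rw [C.f3]; exact Nat.sub_le _ _⟩

/-- The right complement `p^∧` of a standard sequence `p`. -/
def rcomp (p : C.StdSeq) : C.StdSeq :=
  ⟨((C.g ^ ((p.1.2 : ℤ) - (C.d p.1.1 : ℤ))) p.1.1, C.d p.1.1 - p.1.2), by
    rw [C.f3]; exact Nat.sub_le _ _⟩

/-- A standard sequence is full when its length is `d(e)`. -/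
def IsFull (p : C.StdSeq) : Prop := p.1.2 = C.d p.1.1

/-- Composition `q·p` of standard sequences (`p` first, then `q`), defined when the
source of `q` is the terminal `g^{len p}·(base p)` of `p` and the total length stays
within the degree bound. -/
def comp (p q : C.StdSeq) (_h1 : q.1.1 = (C.g ^ (p.1.2 : ℤ)) p.1.1)
    (h2 : p.1.2 + q.1.2 ≤ C.d p.1.1) : C.StdSeq := ⟨(p.1.1, p.1.2 + q.1.2), h2⟩

/-- Closure `[𝒳]` of a set of standard sequences under the identity relation `≡`. -/
def cl (X : Set C.StdSeq) : Set C.StdSeq := {q | ∃ p ∈ X, C.lab q = C.lab p}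

/-- The set `[[^p]^∧]`. -/
def f7set (p : C.StdSeq) : Set C.StdSeq := C.cl (C.rcomp '' C.cl {C.lcomp p})

/-- Condition (f7): `E` is of type S. -/
def TypeS : Prop := ∀ p q : C.StdSeq, C.lab p = C.lab q → C.f7set p = C.f7set q

/-- The relation `R` on the set `𝓔` of formal sequences of standard sequences:
`u R v` iff `u = L(p)`, `v = L(q)` for standard sequences `p, q` with `^p ≡ ^q`. -/
def Rrel (u v : Set E × List (Set E)) : Prop :=
  ∃ p q : C.StdSeq, u = C.lab p ∧ v = C.lab q ∧ C.lab (C.lcomp p) = C.lab (C.lcomp q)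

end FracBrauerConfig

namespace FracBrauerConfig

variable {E : Type*} (C : FracBrauerConfig E)

theorem L_eq_iff_mem {x y : E} : C.L y = C.L x ↔ y ∈ C.L x :=
  ⟨fun h => h ▸ C.mem_L y, fun h => (C.L_class x y h).symm⟩

end FracBrauerConfig

namespace Equiv.Perm

variable {α : Type*}

theorem zpow_natCast_sub_apply_zpow_natCast_apply (g : Perm α) {k m : ℕ} (h : k ≤ m) (a : α) :
    (g ^ ((m - k : ℕ) : ℤ)) ((g ^ (k : ℤ)) a) = (g ^ (m : ℤ)) a := by
  rw [← Perm.mul_apply, ← zpow_add, ← Nat.cast_add, Nat.sub_add_cancel h]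

/-- The common point `x` on the right corresponds to `a = g ^ (-(n - 1)) x` on the left. -/
theorem exists_forall_zpow_apply_mem_iff_nonempty_iInter (g : Perm α) (n : ℕ)
    (S : Fin n → Set α) :
    (∃ a, ∀ i : Fin n, (g ^ ((i : ℕ) : ℤ)) a ∈ S i) ↔
      (⋂ i : Fin n, (fun x => (g ^ ((n - 1 - (i : ℕ) : ℕ) : ℤ)) x) '' S i).Nonempty := by
  simp only [Set.Nonempty, Set.mem_iInter]
  refine Iff.trans ?_ (g ^ ((n - 1 : ℕ) : ℤ)).surjective.exists.symm
  refine exists_congr fun a => forall_congr' fun i => ?_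
  rw [← g.zpow_natCast_sub_apply_zpow_natCast_apply (Nat.le_sub_one_of_lt i.isLt)]
  exact ((g ^ ((n - 1 - (i : ℕ) : ℕ) : ℤ)).injective.mem_set_image).symm

end Equiv.Perm

theorem stmt7_general {E : Type*} (C : FracBrauerConfig E) (n : ℕ)
    (e : Fin n → E) :
    (∃ a : E, ∀ i : Fin n, C.L ((C.g ^ ((i : ℕ) : ℤ)) a) = C.L (e i)) ↔
    (⋂ i : Fin n, (fun x => (C.g ^ ((n - 1 - (i : ℕ) : ℕ) : ℤ)) x) '' C.L (e i)).Nonempty := by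
  simp only [C.L_eq_iff_mem]
  exact C.g.exists_forall_zpow_apply_mem_iff_nonempty_iInter n fun i => C.L (e i)

/-- for angles `e₁, …, eₙ` (`n ≥ 1`) with `P(g·eᵢ) = P(e_{i+1})`,
there exists `e ∈ E` with `L(g^{i-1}·e) = L(eᵢ)` for all `i` if and only if
`⋂_{i=1}^{n} g^{n-i}·L(eᵢ)` is nonempty. -/
theorem stmt7 {E : Type*} (C : FracBrauerConfig E) (n : ℕ) (hn : 1 ≤ n)
    (e : Fin n → E)
    (hcomp : ∀ i : Fin n, (h : (i : ℕ) + 1 < n) →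
      C.P (C.g (e i)) = C.P (e ⟨(i : ℕ) + 1, h⟩)) :
    (∃ a : E, ∀ i : Fin n, C.L ((C.g ^ ((i : ℕ) : ℤ)) a) = C.L (e i)) ↔
    (⋂ i : Fin n, (fun x => (C.g ^ ((n - 1 - (i : ℕ) : ℕ) : ℤ)) x) '' C.L (e i)).Nonempty :=
  stmt7_general C n e
end

section
/- Let E be a fractional Brauer configuration and p, q standard sequences. If p ≡ q (the associated formal sequences of L-classes are equal), then ^p ≡ ^q if and only if p^∧ ≡ q^∧. -/
theorem Equiv.Perm.zpow_apply_zpow_apply {α : Type*} (σ : Equiv.Perm α) (m n : ℤ) (x : α) :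
    (σ ^ m) ((σ ^ n) x) = (σ ^ (m + n)) x := by
  rw [zpow_add, Equiv.Perm.mul_apply]

theorem List.map_range_eq_map_range_iff {α : Type*} {f g : ℕ → α} {n m : ℕ} :
    (List.range n).map f = (List.range m).map g ↔ n = m ∧ ∀ i < n, f i = g i := by
  rw [List.ext_getElem_iff]
  simp only [List.length_map, List.length_range, List.getElem_map, List.getElem_range]
  constructor
  · rintro ⟨rfl, h⟩
    exact ⟨rfl, fun i hi => h i hi hi⟩
  · rintro ⟨rfl, h⟩
    exact ⟨rfl, fun i hi _ => h i hi⟩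

namespace FracBrauerConfig

variable {E : Type*} (C : FracBrauerConfig E)

theorem P_zpow_eq_iff (e₁ e₂ : E) (k₁ k₂ : ℤ) :
    C.P ((C.g ^ k₁) e₁) = C.P ((C.g ^ k₂) e₂) ↔
      C.P ((C.g ^ (C.d e₁ + k₁)) e₁) = C.P ((C.g ^ (C.d e₂ + k₂)) e₂) := by
  rw [C.f4, C.f3, C.f3, Equiv.Perm.zpow_apply_zpow_apply, Equiv.Perm.zpow_apply_zpow_apply]

theorem L_zpow_eq_iff (e₁ e₂ : E) (k₁ k₂ : ℤ) :
    C.L ((C.g ^ k₁) e₁) = C.L ((C.g ^ k₂) e₂) ↔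
      C.L ((C.g ^ (C.d e₁ + k₁)) e₁) = C.L ((C.g ^ (C.d e₂ + k₂)) e₂) := by
  rw [C.f5, C.f3, C.f3, Equiv.Perm.zpow_apply_zpow_apply, Equiv.Perm.zpow_apply_zpow_apply]

theorem lab_eq_lab_iff {p q : C.StdSeq} :
    C.lab p = C.lab q ↔ C.P p.1.1 = C.P q.1.1 ∧ p.1.2 = q.1.2 ∧
      ∀ i < p.1.2, C.L ((C.g ^ (i : ℤ)) p.1.1) = C.L ((C.g ^ (i : ℤ)) q.1.1) := by
  simp only [lab, List.pure_def, List.bind_eq_flatMap, ← List.map_eq_flatMap, List.map_map,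
    Function.comp_def, Prod.mk.injEq, List.map_range_eq_map_range_iff]

end FracBrauerConfig

theorem stmt11_general {E : Type*} (C : FracBrauerConfig E) (p q : C.StdSeq) :
    C.lab (C.lcomp p) = C.lab (C.lcomp q) ↔ C.lab (C.rcomp p) = C.lab (C.rcomp q) := by
  simp only [C.lab_eq_lab_iff, FracBrauerConfig.lcomp, FracBrauerConfig.rcomp,
    Equiv.Perm.zpow_apply_zpow_apply]
  rw [C.P_zpow_eq_iff _ _ (_ - _) (_ - _)]
  simp only [C.L_zpow_eq_iff _ _ (_ + (_ - _)), add_sub_cancel, add_left_comm (C.d _ : ℤ)]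

/-- if `p ≡ q` for standard sequences `p, q`, then
`^p ≡ ^q` if and only if `p^∧ ≡ q^∧`. -/
theorem stmt11 {E : Type*} (C : FracBrauerConfig E) (p q : C.StdSeq)
    (hpq : C.lab p = C.lab q) :
    C.lab (C.lcomp p) = C.lab (C.lcomp q) ↔ C.lab (C.rcomp p) = C.lab (C.rcomp q) :=
  stmt11_general C p q
end

section
/- Let E be a fractional Brauer configuration of type S, and let u, v be formal paths in 𝓔 with u R v. If w is a composable formal path such that the concatenation wu again lies in 𝓔 (i.e., is the formal sequence of a standard sequence), then wv also lies in 𝓔 and (wu) R (wv). -/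
/-!
Let `u = L(p)`, `v = L(q)` with `^p ≡ ^q`, and let `r` be a standard sequence with `L(r) = wu`.
The part `r₁` of `r` carrying `u` is identical to `p`, so type S gives
`[[^r₁]^∧] = [[^p]^∧] = [[^q]^∧] ∋ q`: there is `y ≡ ^r₁` with `q ≡ y^∧`.
Now `^r₁` is the part of `r` carrying `w` followed by `^r`, so `y` starts with a copy of `w`;
removing it leaves `y' ≡ ^r` (identity of standard sequences is preserved under removing initial
segments, by (f2)), and `y'^∧` is a standard sequence with formal sequence `wv` and left
complement `y'`.
-/

namespace FracBrauerConfig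

variable {E : Type*} (C : FracBrauerConfig E)

lemma g_zpow_add_apply (a b : ℤ) (x : E) : (C.g ^ (a + b)) x = (C.g ^ a) ((C.g ^ b) x) := by
  rw [zpow_add, Equiv.Perm.mul_apply]

def word (e : E) (n : ℕ) : List (Set E) :=
  (List.range n).map fun i : ℕ => C.L ((C.g ^ (i : ℤ)) e)

@[simp]
lemma length_word (e : E) (n : ℕ) : (C.word e n).length = n := by simp [word]

lemma lab_eq (s : C.StdSeq) : C.lab s = (C.P s.1.1, C.word s.1.1 s.1.2) := by
  simp only [lab, word, Prod.mk.injEq, true_and]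
  -- `lab` elaborates its index list as `List.range n` lifted to `List ℤ` through the list monad
  change List.map _ (List.flatMap (pure ∘ Nat.cast) _) = _
  rw [List.flatMap_pure_eq_map, List.map_map]
  rfl

lemma word_add (e : E) (a b : ℕ) :
    C.word e (a + b) = C.word e a ++ C.word ((C.g ^ (a : ℤ)) e) b := by
  simp only [word, List.range_add, List.map_append, List.map_map]
  congr 1
  refine List.map_congr_left fun i _ => ?_
  simp only [Function.comp_apply, Nat.cast_add, ← g_zpow_add_apply, add_comm]

lemma L_eq_of_word_eq {a b : E} {n i : ℕ} (h : C.word a n = C.word b n) (hi : i < n) :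
    C.L ((C.g ^ (i : ℤ)) a) = C.L ((C.g ^ (i : ℤ)) b) := by
  simpa [word, List.getElem?_range hi] using congrArg (·[i]?) h

lemma P_eq_of_word_eq {a b : E} {n j : ℕ} (hP : C.P a = C.P b) (h : C.word a n = C.word b n)
    (hj : j ≤ n) : C.P ((C.g ^ (j : ℤ)) a) = C.P ((C.g ^ (j : ℤ)) b) := by
  induction j with
  | zero => simpa using hP
  | succ j _ =>
    have := C.f2 _ _ (C.L_eq_of_word_eq h (by omega : j < n))
    simpa only [Nat.cast_succ, C.g_zpow_add_apply, add_comm _ (1 : ℤ), zpow_one] using this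

lemma length_lab_snd (s : C.StdSeq) : (C.lab s).2.length = s.1.2 := by
  simp [lab_eq]

lemma len_eq_of_lab_eq {s t : C.StdSeq} (h : C.lab s = C.lab t) : s.1.2 = t.1.2 := by
  rw [← length_lab_snd, h, length_lab_snd]

lemma take_word (e : E) (k n : ℕ) : (C.word e n).take k = C.word e (min k n) := by
  rw [word, ← List.map_take, List.take_range, word]

lemma drop_word (e : E) {k n : ℕ} (hk : k ≤ n) :
    (C.word e n).drop k = C.word ((C.g ^ (k : ℤ)) e) (n - k) := by
  conv_lhs => rw [← Nat.add_sub_cancel' hk, word_add]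
  exact List.drop_left' (C.length_word _ _)

def take (k : ℕ) (s : C.StdSeq) : C.StdSeq :=
  ⟨(s.1.1, min k s.1.2), (min_le_right _ _).trans s.2⟩

def drop (k : ℕ) (s : C.StdSeq) : C.StdSeq :=
  ⟨((C.g ^ (k : ℤ)) s.1.1, s.1.2 - k), by rw [C.f3]; exact (Nat.sub_le _ _).trans s.2⟩

lemma lab_take (k : ℕ) (s : C.StdSeq) :
    C.lab (C.take k s) = ((C.lab s).1, (C.lab s).2.take k) := by
  simp only [lab_eq, take, take_word]

lemma lab_drop_snd {k : ℕ} {s : C.StdSeq} (hk : k ≤ s.1.2) :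
    (C.lab (C.drop k s)).2 = (C.lab s).2.drop k := by
  simp only [lab_eq, drop, C.drop_word _ hk]

lemma lab_drop_eq_of_lab_eq {k : ℕ} {s t : C.StdSeq} (h : C.lab s = C.lab t) (hk : k ≤ s.1.2) :
    C.lab (C.drop k s) = C.lab (C.drop k t) := by
  have hlen := C.len_eq_of_lab_eq h
  refine Prod.ext ?_ ?_
  · simp only [lab_eq, Prod.ext_iff] at h
    simp only [lab_eq, drop]
    exact C.P_eq_of_word_eq h.1 (hlen ▸ h.2) hk
  · rw [C.lab_drop_snd hk, C.lab_drop_snd (hlen ▸ hk), h]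

lemma lcomp_rcomp (s : C.StdSeq) : C.lcomp (C.rcomp s) = s := by
  obtain ⟨⟨e, n⟩, hn : n ≤ C.d e⟩ := s
  ext
  · simp only [lcomp, rcomp, C.f3, ← C.g_zpow_add_apply]
    rw [Nat.cast_sub hn]
    simp
  · simp only [lcomp, rcomp, C.f3]
    omega

lemma rcomp_lcomp (s : C.StdSeq) : C.rcomp (C.lcomp s) = s := by
  obtain ⟨⟨e, n⟩, hn : n ≤ C.d e⟩ := s
  ext
  · simp only [lcomp, rcomp, C.f3, ← C.g_zpow_add_apply]
    rw [Nat.cast_sub hn]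
    simp
  · simp only [lcomp, rcomp, C.f3]
    omega

lemma take_lcomp_take {j : ℕ} {s : C.StdSeq} (hj : j ≤ s.1.2) :
    C.take (s.1.2 - j) (C.lcomp (C.take j s)) = C.drop j s := by
  obtain ⟨⟨e, n⟩, hn : n ≤ C.d e⟩ := s
  have hj' : min j n = j := min_eq_left hj
  ext
  · simp only [take, lcomp, drop, hj']
  · simp only [take, lcomp, drop, hj']
    omega

lemma drop_lcomp_take {j : ℕ} {s : C.StdSeq} (hj : j ≤ s.1.2) :
    C.drop (s.1.2 - j) (C.lcomp (C.take j s)) = C.lcomp s := by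
  obtain ⟨⟨e, n⟩, hn : n ≤ C.d e⟩ := s
  have hj' : min j n = j := min_eq_left hj
  ext
  · simp only [take, lcomp, drop, hj', ← C.g_zpow_add_apply]
    push_cast [hj]
    ring_nf
  · simp only [take, lcomp, drop, hj']
    omega

lemma sub_le_len_lcomp_take (j : ℕ) (s : C.StdSeq) :
    s.1.2 - j ≤ (C.lcomp (C.take j s)).1.2 := by
  have := s.2
  simp only [lcomp, take]
  omega

lemma lab_rcomp_drop {k : ℕ} {s : C.StdSeq} (hk : k ≤ s.1.2) :
    C.lab (C.rcomp (C.drop k s)) =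
      ((C.lab (C.rcomp s)).1, (C.lab (C.rcomp s)).2 ++ (C.lab s).2.take k) := by
  obtain ⟨⟨e, n⟩, hn : n ≤ C.d e⟩ := s
  replace hk : k ≤ n := hk
  have hbase :
      (C.g ^ (((n - k : ℕ) : ℤ) - (C.d ((C.g ^ (k : ℤ)) e) : ℤ))) ((C.g ^ (k : ℤ)) e) =
        (C.g ^ ((n : ℤ) - C.d e)) e := by
    rw [← C.g_zpow_add_apply, C.f3]
    push_cast [hk]
    ring_nf
  have hlen : C.d ((C.g ^ (k : ℤ)) e) - (n - k) = (C.d e - n) + k := by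
    rw [C.f3]
    omega
  simp only [lab_eq, rcomp, drop, take_word, hbase, hlen, word_add, ← C.g_zpow_add_apply]
  push_cast [hn]
  simp [min_eq_left hk]

lemma mem_f7set_iff {p q : C.StdSeq} :
    q ∈ C.f7set p ↔ ∃ y, C.lab y = C.lab (C.lcomp p) ∧ C.lab q = C.lab (C.rcomp y) := by
  simp only [f7set, cl, Set.mem_ofPred_eq, Set.mem_image, Set.mem_singleton_iff]
  constructor
  · rintro ⟨_, ⟨y, ⟨_, rfl, hy⟩, rfl⟩, hq⟩
    exact ⟨y, hy, hq⟩
  · rintro ⟨y, hy, hq⟩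
    exact ⟨_, ⟨y, ⟨_, rfl, hy⟩, rfl⟩, hq⟩

lemma mem_f7set_self (p : C.StdSeq) : p ∈ C.f7set p :=
  C.mem_f7set_iff.2 ⟨C.lcomp p, rfl, by rw [rcomp_lcomp]⟩

lemma f7set_eq_of_lab_lcomp_eq {p q : C.StdSeq} (h : C.lab (C.lcomp p) = C.lab (C.lcomp q)) :
    C.f7set p = C.f7set q := by
  ext
  simp only [mem_f7set_iff, h]

end FracBrauerConfig

/-- in an f-BC of type S, if `u R v` in `𝓔` and `w` is a formal path
such that the concatenation `wu` again lies in `𝓔`, then `wv` lies in `𝓔` and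
`(wu) R (wv)`. -/
theorem stmt18 {E : Type*} (C : FracBrauerConfig E) (hS : C.TypeS)
    (u v : Set E × List (Set E)) (hR : C.Rrel u v) (w : List (Set E))
    (hw : (u.1, u.2 ++ w) ∈ Set.range C.lab) :
    (v.1, v.2 ++ w) ∈ Set.range C.lab ∧ C.Rrel (u.1, u.2 ++ w) (v.1, v.2 ++ w) := by
  obtain ⟨p, q, rfl, rfl, hpq⟩ := hR
  obtain ⟨r, hr⟩ := hw
  have hlen_p := C.length_lab_snd p
  have hlen_r : r.1.2 = p.1.2 + w.length := by
    rw [← C.length_lab_snd r, hr, List.length_append, hlen_p]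
  have hp : C.lab (C.take p.1.2 r) = C.lab p := by
    rw [C.lab_take, hr, List.take_left' hlen_p]
  have hw : (C.lab (C.drop p.1.2 r)).2 = w := by
    rw [C.lab_drop_snd (by omega), hr, List.drop_left' hlen_p]
  obtain ⟨y, hy, hqy⟩ := C.mem_f7set_iff.1 <|
    (hS _ _ hp).trans (C.f7set_eq_of_lab_lcomp_eq hpq) ▸ C.mem_f7set_self q
  have hky : w.length ≤ y.1.2 := by
    simpa [C.len_eq_of_lab_eq hy, hlen_r] using C.sub_le_len_lcomp_take p.1.2 r
  have hlcomp_r : C.drop w.length (C.lcomp (C.take p.1.2 r)) = C.lcomp r := by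
    simpa [hlen_r] using C.drop_lcomp_take (s := r) (j := p.1.2) (by omega)
  have hyw : (C.lab y).2.take w.length = w := by
    have := C.take_lcomp_take (s := r) (j := p.1.2) (by omega)
    rw [hlen_r, Nat.add_sub_cancel_left] at this
    conv_rhs => rw [← hw, ← this, C.lab_take]
    rw [hy]
  have hq' : C.lab (C.rcomp (C.drop w.length y)) = ((C.lab q).1, (C.lab q).2 ++ w) := by
    rw [C.lab_rcomp_drop hky, ← hqy, hyw]
  refine ⟨⟨_, hq'⟩, r, _, hr.symm, hq'.symm, ?_⟩
  rw [← hlcomp_r, C.lcomp_rcomp]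
  exact C.lab_drop_eq_of_lab_eq hy.symm (C.len_eq_of_lab_eq hy ▸ hky)
end
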